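/- The center 𝔷(𝔎_{r,s}) of the Lie algebra 𝔎_{r,s} equals the F-span of the set of basis elements e_I that lie in 𝔷(𝔎_{r,s}). Equivalently: if ξ = Σ_I ξ_I e_I ∈ 𝔷(𝔎_{r,s}) (the sum over multi-indices I with e_I ∈ 𝔎_{r,s}) and ξ_I ≠ 0, then e_I ∈ 𝔷(𝔎_{r,s}). -/

import Mathlib

/-
Setting (Eberlein, "Isometries of Clifford Algebras II"):
`F` a field with `char F ≠ 2`, `n = r + s > 0`, and `Cl(r,s)` the Clifford algebra of `F^n`
in which `eᵢ·eⱼ = -eⱼ·eᵢ` for `i ≠ j`, `eᵢ² = -1` for the first `r` indices and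
`eᵢ² = +1` for the last `s` indices.
-/

open CliffordAlgebra

namespace CliffPaper

/-- The quadratic form `q(x) = -x₁² - … - x_r² + x_{r+1}² + … + x_n²` on `F^(r+s)`. -/
noncomputable def Qf (F : Type*) [Field F] (r s : ℕ) : QuadraticForm F (Fin (r + s) → F) :=
  QuadraticMap.weightedSumSquares F (fun i : Fin (r + s) => if (i : ℕ) < r then (-1 : F) else 1)

/-- The Clifford algebra `Cl(r,s)`. -/
abbrev Cl (F : Type*) [Field F] (r s : ℕ) : Type _ := CliffordAlgebra (Qf F r s)

/-- The generator `e_i` of `Cl(r,s)` (`i` is a zero-based index, so `e_i² = -1` for `i < r`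
and `e_i² = +1` for `r ≤ i`). -/
noncomputable def gen (F : Type*) [Field F] (r s : ℕ) (i : Fin (r + s)) : Cl F r s :=
  ι (Qf F r s) (Pi.single i 1)

/-- For a multi-index `I = {i₁ < … < i_k}`, the product `e_I = e_{i₁} ⋯ e_{i_k}`. -/
noncomputable def eProd (F : Type*) [Field F] (r s : ℕ) (I : Finset (Fin (r + s))) : Cl F r s :=
  ((I.sort (· ≤ ·)).map (gen F r s)).prod

/-- Clifford conjugation: the unique anti-automorphism `c` of `Cl(r,s)` with `c ∘ c = id` and
`c(v) = -v` for all `v ∈ F^n`; concretely, reversal composed with the grade involution. -/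
noncomputable def conj (F : Type*) [Field F] (r s : ℕ) : Cl F r s →ₗ[F] Cl F r s :=
  (reverse (Q := Qf F r s)).comp (involute (Q := Qf F r s)).toLinearMap

theorem conj_mul (F : Type*) [Field F] (r s : ℕ) (a b : Cl F r s) :
    conj F r s (a * b) = conj F r s b * conj F r s a := by
  simp [conj, reverse.map_mul]

/-- `𝔊_{r,s} = {x ∈ Cl(r,s) : c(x) = -x}`, the `-1`-eigenspace of Clifford conjugation,
as an `F`-subspace of `Cl(r,s)`. -/
noncomputable def Gsub (F : Type*) [Field F] (r s : ℕ) : Submodule F (Cl F r s) :=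
  LinearMap.ker (conj F r s + LinearMap.id)

theorem mem_Gsub {F : Type*} [Field F] {r s : ℕ} (x : Cl F r s) :
    x ∈ Gsub F r s ↔ conj F r s x = -x := by
  simp [Gsub, LinearMap.mem_ker, add_eq_zero_iff_eq_neg]

attribute [local instance] LieRing.ofAssociativeRing

/-- `𝔊_{r,s}` as a Lie subalgebra of `Cl(r,s)` with the commutator bracket
`⁅x,y⁆ = x*y - y*x`. -/
noncomputable def GLie (F : Type*) [Field F] (r s : ℕ) : LieSubalgebra F (Cl F r s) where
  toSubmodule := Gsub F r s
  lie_mem' := by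
    intro x y hx hy
    have hx' : x ∈ Gsub F r s := hx
    have hy' : y ∈ Gsub F r s := hy
    show ⁅x, y⁆ ∈ Gsub F r s
    rw [mem_Gsub] at hx' hy' ⊢
    rw [Ring.lie_def, map_sub, conj_mul, conj_mul, hx', hy']
    noncomm_ring

/-- `𝔎_{r,s}`: the `+1`-eigenspace of `β` restricted to `𝔊_{r,s}`. -/
noncomputable def Ksub (F : Type*) [Field F] (r s : ℕ) (β : Cl F r s ≃ₐ[F] Cl F r s) :
    Submodule F (Cl F r s) :=
  LinearMap.ker (β.toLinearMap - LinearMap.id) ⊓ Gsub F r s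

/-- `𝔓_{r,s}`: the `-1`-eigenspace of `β` restricted to `𝔊_{r,s}`. -/
noncomputable def Psub (F : Type*) [Field F] (r s : ℕ) (β : Cl F r s ≃ₐ[F] Cl F r s) :
    Submodule F (Cl F r s) :=
  LinearMap.ker (β.toLinearMap + LinearMap.id) ⊓ Gsub F r s

/-- The center `𝔷(𝔎_{r,s}) = {x ∈ 𝔎_{r,s} : [x,y] = 0 for all y ∈ 𝔎_{r,s}}`. -/
noncomputable def ZKsub (F : Type*) [Field F] (r s : ℕ) (β : Cl F r s ≃ₐ[F] Cl F r s) :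
    Submodule F (Cl F r s) where
  carrier := {x | x ∈ Ksub F r s β ∧ ∀ y ∈ Ksub F r s β, x * y = y * x}
  zero_mem' := ⟨zero_mem _, fun y _ => by simp⟩
  add_mem' := fun {a b} ha hb => ⟨add_mem ha.1 hb.1, fun y hy => by
    rw [add_mul, mul_add, ha.2 y hy, hb.2 y hy]⟩
  smul_mem' := fun c a ha => ⟨Submodule.smul_mem _ c ha.1, fun y hy => by
    rw [smul_mul_assoc, mul_smul_comm, ha.2 y hy]⟩

/-- `𝔥_{r,s}`: the span of the `e_I` with `|I| ≡ 1, 2 (mod 4)` and `I ≠ {1,…,n}`. -/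
noncomputable def Hsub (F : Type*) [Field F] (r s : ℕ) : Submodule F (Cl F r s) :=
  Submodule.span F {x | ∃ I : Finset (Fin (r + s)), I.Nonempty ∧ I ≠ Finset.univ ∧
    (I.card % 4 = 1 ∨ I.card % 4 = 2) ∧ x = eProd F r s I}

/-- The volume element `ω = e₁e₂⋯e_n`. -/
noncomputable def omegaEl (F : Type*) [Field F] (r s : ℕ) : Cl F r s :=
  eProd F r s Finset.univ

/-!
Negating the single generator `e_j` extends to an involutive automorphism `signFlip j` of
`Cl(r,s)` that commutes with `β` and with Clifford conjugation, so it preserves `𝔷(𝔎_{r,s})`;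
it acts on `e_I` by the sign `(-1)^[j ∈ I]`. The operators `∏_j ½(1 ± signFlip j)` therefore
project onto the lines `F e_I`, preserve the center and sum to the identity, so every element
of the center is the sum of its components `ξ_I e_I`, each of which lies in the center. The
`I = ∅` component is a scalar, and a scalar `c` with `c = -c` vanishes since `char F ≠ 2`.
-/

section SignEigenbasis

variable {K V κ : Type*} [Field K] [AddCommGroup V] [Module K V] [DecidableEq κ]
  {T : κ → Module.End K V} {b : Finset κ → V}

noncomputable def signProjFactor (T : κ → Module.End K V) (J : Finset κ) (k : κ) :
    Module.End K V :=
  (2⁻¹ : K) • (1 + (if k ∈ J then -1 else 1 : K) • T k)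

/-- The projection onto the joint eigenspace on which `T k` acts by `-1` exactly for `k ∈ J`. -/
noncomputable def signProj [Fintype κ] (T : κ → Module.End K V) (J : Finset κ) :
    Module.End K V :=
  (Finset.univ.toList.map (signProjFactor T J)).prod

variable (hT : ∀ k J, T k (b J) = if k ∈ J then -b J else b J)
include hT

theorem signProjFactor_apply (h2 : (2 : K) ≠ 0) (J J' : Finset κ) (k : κ) :
    signProjFactor T J k (b J') = if (k ∈ J ↔ k ∈ J') then b J' else 0 := by
  have half : (2⁻¹ : K) • (b J' + b J') = b J' := by
    rw [← two_smul K, smul_smul, inv_mul_cancel₀ h2, one_smul]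
  simp only [signProjFactor, LinearMap.smul_apply, LinearMap.add_apply, Module.End.one_apply, hT]
  by_cases hJ : k ∈ J <;> by_cases hJ' : k ∈ J' <;> simp [hJ, hJ', half]

theorem list_prod_map_signProjFactor_apply (h2 : (2 : K) ≠ 0) (J J' : Finset κ) (l : List κ) :
    (l.map (signProjFactor T J)).prod (b J') =
      if ∀ k ∈ l, (k ∈ J ↔ k ∈ J') then b J' else 0 := by
  induction l with
  | nil => simp
  | cons k l ih =>
    rw [List.map_cons, List.prod_cons, Module.End.mul_apply, ih]
    by_cases hl : ∀ k ∈ l, (k ∈ J ↔ k ∈ J')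
    · rw [if_pos hl, signProjFactor_apply hT h2]
      simp only [List.forall_mem_cons, and_iff_left hl]
    · simp [hl]

theorem signProj_apply [Fintype κ] (h2 : (2 : K) ≠ 0) (J J' : Finset κ) :
    signProj T J (b J') = if J = J' then b J' else 0 := by
  simp only [signProj, list_prod_map_signProjFactor_apply hT h2, Finset.mem_toList,
    Finset.mem_univ, forall_const, ← Finset.ext_iff]

theorem sum_signProj [Fintype κ] (h2 : (2 : K) ≠ 0) (hb : Submodule.span K (Set.range b) = ⊤) :
    ∑ J, signProj T J = 1 :=
  LinearMap.ext_on_range hb fun J' => by simp [LinearMap.sum_apply, signProj_apply hT h2]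

theorem signProj_mem_span_singleton [Fintype κ] (h2 : (2 : K) ≠ 0)
    (hb : Submodule.span K (Set.range b) = ⊤) (J : Finset κ) (x : V) :
    signProj T J x ∈ Submodule.span K {b J} := by
  have hrange : LinearMap.range (signProj T J) ≤ Submodule.span K {b J} := by
    rw [LinearMap.range_eq_map, ← hb, Submodule.map_span, Submodule.span_le]
    rintro _ ⟨_, ⟨J', rfl⟩, rfl⟩
    rw [signProj_apply hT h2]
    split_ifs with hJ
    · exact hJ ▸ Submodule.mem_span_singleton_self (R := K) (b J)
    · exact zero_mem _
  exact hrange ⟨x, rfl⟩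

omit hT in
theorem mapsTo_signProj [Fintype κ] (W : Submodule K V) (hW : ∀ k, Set.MapsTo (T k) W W)
    (J : Finset κ) : Set.MapsTo (signProj T J) W W := by
  refine List.prod_induction (fun f : Module.End K V => Set.MapsTo f W W)
    (fun f g hf hg => hf.comp hg) (Set.mapsTo_id _) ?_
  simp only [List.mem_map]
  rintro _ ⟨k, -, rfl⟩ x hx
  exact W.smul_mem _ (W.add_mem hx (W.smul_mem _ (hW k hx)))

theorem _root_.Submodule.eq_span_range_inter_of_mapsTo [Fintype κ] (h2 : (2 : K) ≠ 0)
    (hb : Submodule.span K (Set.range b) = ⊤) (W : Submodule K V)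
    (hW : ∀ k, Set.MapsTo (T k) W W) : W = Submodule.span K (Set.range b ∩ W) := by
  refine le_antisymm (fun x hx => ?_) (Submodule.span_le.2 Set.inter_subset_right)
  have hsum : x = ∑ J, signProj T J x := by
    rw [← LinearMap.sum_apply, sum_signProj hT h2 hb, Module.End.one_apply]
  rw [hsum]
  refine Submodule.sum_mem _ fun J _ => ?_
  obtain ⟨c, hc⟩ := Submodule.mem_span_singleton.1 (signProj_mem_span_singleton hT h2 hb J x)
  have hxJ : signProj T J x ∈ W := mapsTo_signProj W hW J hx
  rw [← hc] at hxJ ⊢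
  rcases eq_or_ne c 0 with rfl | hc0
  · rw [zero_smul]
    exact zero_mem _
  · refine Submodule.smul_mem _ _ (Submodule.subset_span ⟨⟨J, rfl⟩, ?_⟩)
    rw [← inv_smul_smul₀ hc0 (b J)]
    exact W.smul_mem _ hxJ

end SignEigenbasis

section CliffordMap

variable {R M₁ M₂ : Type*} [CommRing R] [AddCommGroup M₁] [AddCommGroup M₂] [Module R M₁]
  [Module R M₂] {Q₁ : QuadraticForm R M₁} {Q₂ : QuadraticForm R M₂}

theorem _root_.CliffordAlgebra.map_involute (f : Q₁ →qᵢ Q₂) (x : CliffordAlgebra Q₁) :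
    map f (involute x) = involute (map f x) :=
  have hcomm : (map f).comp involute = involute.comp (map f) :=
    hom_ext <| LinearMap.ext fun v => by simp
  AlgHom.congr_fun hcomm x

theorem _root_.CliffordAlgebra.map_reverse (f : Q₁ →qᵢ Q₂) (x : CliffordAlgebra Q₁) :
    map f (reverse x) = reverse (map f x) := by
  induction x using CliffordAlgebra.induction with
  | algebraMap c => simp
  | ι v => simp
  | mul a b ha hb => simp [reverse.map_mul, ha, hb]
  | add a b ha hb => simp [ha, hb]

end CliffordMap

section SignFlip

variable {F : Type*} [Field F] {r s : ℕ}

theorem isOrtho_Qf_single {i j : Fin (r + s)} (hij : i ≠ j) :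
    (Qf F r s).IsOrtho (Pi.single i 1) (Pi.single j 1) := by
  rw [QuadraticMap.isOrtho_def, Qf, QuadraticMap.weightedSumSquares_apply,
    QuadraticMap.weightedSumSquares_apply, QuadraticMap.weightedSumSquares_apply,
    ← Finset.sum_add_distrib]
  refine Finset.sum_congr rfl fun k _ => ?_
  rcases eq_or_ne k i with rfl | hki <;> rcases eq_or_ne k j with rfl | hkj <;>
    simp_all

theorem gen_mul_gen_of_ne {i j : Fin (r + s)} (hij : i ≠ j) :
    gen F r s i * gen F r s j = -(gen F r s j * gen F r s i) :=
  ι_mul_ι_comm_of_isOrtho (isOrtho_Qf_single hij)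

theorem eProd_empty : eProd F r s ∅ = 1 := by
  simp [eProd]

theorem eProd_insert_of_lt {a : Fin (r + s)} {J : Finset (Fin (r + s))} (ha : ∀ x ∈ J, a < x) :
    eProd F r s (insert a J) = gen F r s a * eProd F r s J := by
  have haJ : a ∉ J := fun h => lt_irrefl a (ha a h)
  rw [eProd, Finset.sort_insert (· ≤ ·) (fun x hx => (ha x hx).le) haJ, List.map_cons,
    List.prod_cons, eProd]

theorem gen_mul_eProd (i : Fin (r + s)) (J : Finset (Fin (r + s))) :
    ∃ (c : F) (M : Finset (Fin (r + s))), M ⊆ insert i J ∧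
      gen F r s i * eProd F r s J = c • eProd F r s M := by
  induction J using Finset.induction_on_min with
  | empty => exact ⟨1, {i}, by simp, by simp [eProd, one_smul]⟩
  | insert a J ha ih =>
    rw [eProd_insert_of_lt ha]
    rcases lt_trichotomy i a with hia | rfl | hai
    · refine ⟨1, insert i (insert a J), subset_rfl, ?_⟩
      rw [one_smul, eProd_insert_of_lt, eProd_insert_of_lt ha]
      intro x hx
      rcases Finset.mem_insert.1 hx with rfl | hx
      exacts [hia, hia.trans (ha x hx)]
    · refine ⟨Qf F r s (Pi.single i 1), J, fun x hx => by simp [hx], ?_⟩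
      rw [← mul_assoc, gen, ι_sq_scalar, Algebra.smul_def]
    · obtain ⟨c, M, hM, hc⟩ := ih
      have haM : ∀ x ∈ M, a < x := fun x hx => by
        rcases Finset.mem_insert.1 (hM hx) with rfl | hx
        exacts [hai, ha x hx]
      refine ⟨-c, insert a M, ?_, ?_⟩
      · intro x hx
        rcases Finset.mem_insert.1 hx with rfl | hx
        · simp
        · rcases Finset.mem_insert.1 (hM hx) with rfl | hx <;> simp [hx]
      · rw [← mul_assoc, gen_mul_gen_of_ne hai.ne', neg_mul, mul_assoc, hc,
          eProd_insert_of_lt haM, mul_smul_comm, neg_smul]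

theorem gen_mul_mem_span_range_eProd (i : Fin (r + s)) {x : Cl F r s}
    (hx : x ∈ Submodule.span F (Set.range (eProd F r s))) :
    gen F r s i * x ∈ Submodule.span F (Set.range (eProd F r s)) := by
  induction hx using Submodule.span_induction with
  | mem y hy =>
    obtain ⟨J, rfl⟩ := hy
    obtain ⟨c, M, -, hc⟩ := gen_mul_eProd (F := F) i J
    rw [hc]
    exact Submodule.smul_mem _ _ (Submodule.subset_span ⟨M, rfl⟩)
  | zero => simp
  | add y z _ _ hy hz => rw [mul_add]; exact add_mem hy hz
  | smul c y _ hy => rw [mul_smul_comm]; exact Submodule.smul_mem _ _ hy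

theorem span_range_eProd : Submodule.span F (Set.range (eProd F r s)) = ⊤ := by
  rw [eq_top_iff]
  rintro x -
  induction x using CliffordAlgebra.left_induction with
  | algebraMap c =>
    rw [Algebra.algebraMap_eq_smul_one, ← eProd_empty]
    exact Submodule.smul_mem _ _ (Submodule.subset_span ⟨∅, rfl⟩)
  | add x y hx hy => exact add_mem hx hy
  | ι_mul x v hx =>
    rw [← Finset.univ_sum_single v, map_sum, Finset.sum_mul]
    refine Submodule.sum_mem _ fun i _ => ?_
    have hsingle : Pi.single i (v i) = v i • Pi.single i (1 : F) := by
      rw [← Pi.single_smul, smul_eq_mul, mul_one]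
    rw [hsingle, map_smul, smul_mul_assoc]
    exact Submodule.smul_mem _ _ (gen_mul_mem_span_range_eProd i hx)

def reflectCoord (j : Fin (r + s)) : Qf F r s →qᵢ Qf F r s where
  toFun v i := if i = j then -v i else v i
  map_add' v w := by
    funext i
    simp only [Pi.add_apply]
    split_ifs <;> ring
  map_smul' c v := by
    funext i
    simp only [Pi.smul_apply, smul_eq_mul, RingHom.id_apply]
    split_ifs <;> ring
  map_app' v := by
    simp only [Qf, QuadraticMap.weightedSumSquares_apply]
    refine Finset.sum_congr rfl fun i _ => ?_
    split_ifs <;> ring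

noncomputable def signFlip (j : Fin (r + s)) : Cl F r s →ₐ[F] Cl F r s :=
  map (reflectCoord j)

theorem signFlip_ι (j : Fin (r + s)) (v : Fin (r + s) → F) :
    signFlip j (ι (Qf F r s) v) = ι (Qf F r s) (fun i => if i = j then -v i else v i) :=
  map_apply_ι _ _

theorem signFlip_signFlip (j : Fin (r + s)) (x : Cl F r s) : signFlip j (signFlip j x) = x := by
  have hid : (signFlip j).comp (signFlip j) = AlgHom.id F (Cl F r s) :=
    hom_ext <| LinearMap.ext fun v => by
      simp only [LinearMap.comp_apply, AlgHom.toLinearMap_apply, AlgHom.comp_apply, signFlip_ι,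
        AlgHom.id_apply]
      congr 1
      funext i
      split_ifs <;> simp
  exact AlgHom.congr_fun hid x

theorem signFlip_gen (j i : Fin (r + s)) :
    signFlip j (gen F r s i) = if i = j then -gen F r s i else gen F r s i := by
  rw [gen, signFlip_ι]
  split_ifs with hij
  · subst hij
    rw [← map_neg]
    congr 1
    funext k
    by_cases hk : k = i <;> simp [hk]
  · congr 1
    funext k
    by_cases hk : k = j
    · simp [hk, Ne.symm hij]
    · simp [hk]

theorem signFlip_eProd (j : Fin (r + s)) (J : Finset (Fin (r + s))) :
    signFlip j (eProd F r s J) = if j ∈ J then -eProd F r s J else eProd F r s J := by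
  induction J using Finset.induction_on_min with
  | empty => simp [eProd_empty]
  | insert a J ha ih =>
    have haJ : a ∉ J := fun h => lt_irrefl a (ha a h)
    rw [eProd_insert_of_lt ha, map_mul, signFlip_gen, ih]
    rcases eq_or_ne a j with rfl | haj
    · simp [haJ]
    · by_cases hj : j ∈ J <;> simp [haj, Ne.symm haj, hj]

variable {β : Cl F r s ≃ₐ[F] Cl F r s}

theorem beta_signFlip
    (hβ : ∀ v : Fin (r + s) → F,
      β (ι (Qf F r s) v) = ι (Qf F r s) (fun i => if (i : ℕ) < r then v i else -v i))
    (j : Fin (r + s)) (x : Cl F r s) : β (signFlip j x) = signFlip j (β x) := by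
  have hcomm : (β : Cl F r s →ₐ[F] Cl F r s).comp (signFlip j) = (signFlip j).comp β :=
    hom_ext <| LinearMap.ext fun v => by
      change β (signFlip j (ι _ v)) = signFlip j (β (ι _ v))
      rw [signFlip_ι, hβ, hβ, signFlip_ι]
      congr 1
      funext i
      split_ifs <;> simp
  exact AlgHom.congr_fun hcomm x

theorem conj_signFlip (j : Fin (r + s)) (x : Cl F r s) :
    conj F r s (signFlip j x) = signFlip j (conj F r s x) := by
  simp [conj, signFlip, map_involute, map_reverse]

theorem mem_Ksub {x : Cl F r s} : x ∈ Ksub F r s β ↔ β x = x ∧ conj F r s x = -x := by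
  rw [Ksub, Submodule.mem_inf, mem_Gsub, LinearMap.mem_ker, LinearMap.sub_apply,
    LinearMap.id_apply, AlgEquiv.toLinearMap_apply, sub_eq_zero]

theorem map_mem_Ksub {φ : Cl F r s →ₐ[F] Cl F r s} (hβφ : ∀ x, β (φ x) = φ (β x))
    (hconjφ : ∀ x, conj F r s (φ x) = φ (conj F r s x)) {x : Cl F r s}
    (hx : x ∈ Ksub F r s β) : φ x ∈ Ksub F r s β := by
  rw [mem_Ksub] at hx ⊢
  rw [hβφ, hconjφ, hx.1, hx.2, map_neg]
  exact ⟨rfl, rfl⟩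

theorem map_mem_ZKsub {φ : Cl F r s →ₐ[F] Cl F r s} (hφ : ∀ x, φ (φ x) = x)
    (hβφ : ∀ x, β (φ x) = φ (β x)) (hconjφ : ∀ x, conj F r s (φ x) = φ (conj F r s x))
    {x : Cl F r s} (hx : x ∈ ZKsub F r s β) : φ x ∈ ZKsub F r s β := by
  refine ⟨map_mem_Ksub hβφ hconjφ hx.1, fun y hy => ?_⟩
  calc φ x * y = φ (x * φ y) := by rw [map_mul, hφ]
    _ = φ (φ y * x) := by rw [hx.2 _ (map_mem_Ksub hβφ hconjφ hy)]
    _ = y * φ x := by rw [map_mul, hφ]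

theorem one_notMem_Gsub (hF : ringChar F ≠ 2) : (1 : Cl F r s) ∉ Gsub F r s := by
  have h2 : (2 : F) ≠ 0 := Ring.two_ne_zero hF
  -- makes `Cl F r s` nontrivial, so that `algebraMap` is injective
  have : Invertible (2 : F) := invertibleOfNonzero h2
  intro h
  rw [mem_Gsub, show conj F r s 1 = 1 by simp [conj], eq_neg_iff_add_eq_zero, one_add_one_eq_two,
    ← map_ofNat (algebraMap F (Cl F r s)), map_eq_zero_iff _ (algebraMap F _).injective] at h
  exact h2 h

end SignFlip

theorem statement10_general (F : Type*) [Field F] (hF : ringChar F ≠ 2) (r s : ℕ)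
    (β : Cl F r s ≃ₐ[F] Cl F r s)
    (hβ : ∀ v : Fin (r + s) → F,
      β (ι (Qf F r s) v) = ι (Qf F r s) (fun i => if (i : ℕ) < r then v i else -v i)) :
    ZKsub F r s β = Submodule.span F
      {x | (∃ I : Finset (Fin (r + s)), I.Nonempty ∧ x = eProd F r s I) ∧
        x ∈ ZKsub F r s β} := by
  have hZ := Submodule.eq_span_range_inter_of_mapsTo (T := fun j => (signFlip j).toLinearMap)
    signFlip_eProd (Ring.two_ne_zero hF) span_range_eProd (ZKsub F r s β)
    fun j _ hx => map_mem_ZKsub (signFlip_signFlip j) (beta_signFlip hβ j) (conj_signFlip j) hx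
  refine le_antisymm (hZ.le.trans (Submodule.span_mono ?_))
    (Submodule.span_le.2 fun x hx => hx.2)
  rintro _ ⟨⟨I, rfl⟩, hI⟩
  refine ⟨⟨I, Finset.nonempty_iff_ne_empty.2 ?_, rfl⟩, hI⟩
  rintro rfl
  exact one_notMem_Gsub hF (eProd_empty (F := F) ▸ hI.1.2)

/-- the center 𝔷(𝔎_{r,s}) equals the F-span of the basis elements e_I lying
in 𝔷(𝔎_{r,s}). -/
theorem statement10 (F : Type*) [Field F] (hF : ringChar F ≠ 2) (r s : ℕ) (hn : 0 < r + s)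
    (β : Cl F r s ≃ₐ[F] Cl F r s)
    (hβ : ∀ v : Fin (r + s) → F,
      β (ι (Qf F r s) v) = ι (Qf F r s) (fun i => if (i : ℕ) < r then v i else -v i)) :
    ZKsub F r s β = Submodule.span F
      {x | (∃ I : Finset (Fin (r + s)), I.Nonempty ∧ x = eProd F r s I) ∧
        x ∈ ZKsub F r s β} :=
  statement10_general F hF r s β hβ

end CliffPaper
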